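/- For G = SU(n) with standard maximal torus T (diagonal special unitary matrices) and T' the centralizer of Λ_n in SU(n), the Lie algebras 𝔱 and 𝔱' are orthogonal with respect to the trace form ⟨X,Y⟩ = Re tr(XY). -/

import Mathlib

/-!
Up to the nonzero scalar `C`, `Λ_n` is the permutation matrix of the cyclic shift
`i ↦ i + 1`, so a matrix `Y` commuting with it satisfies `Y (i + 1) (j + 1) = Y i j`.
In particular the diagonal of `Y` is constant, hence zero since `tr Y = 0`. As `X` is
diagonal, `tr (X Y) = ∑ X i i * Y i i = 0`.
-/

theorem Fin.apply_eq_of_apply_finRotate {n : ℕ} {α : Type*} {f : Fin n → α}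
    (h : ∀ i, f (finRotate n i) = f i) (i j : Fin n) : f i = f j := by
  have : NeZero n := i.neZero
  have h_eq_zero : ∀ k, f k = f 0 := fun k => by
    have := Function.Semiconj.iterate_right (f := f) (gb := id) h k.val 0
    rwa [← finCycle_eq_finRotate_iterate, finCycle_apply, zero_add, Function.iterate_id] at this
  rw [h_eq_zero i, h_eq_zero j]

namespace Matrix

theorem permMatrix_eq_sum_single {ι R : Type*} [Fintype ι] [DecidableEq ι]
    [AddCommMonoidWithOne R] (σ : Equiv.Perm ι) :
    σ.permMatrix R = ∑ i, single i (σ i) 1 := by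
  ext a b
  simp [sum_apply, single_apply, ite_and]

theorem permMatrix_finRotate {R : Type*} [AddCommMonoidWithOne R] {n : ℕ} (hn : 0 < n) :
    (finRotate n).permMatrix R = single ⟨n - 1, by omega⟩ ⟨0, hn⟩ 1 +
      ∑ k : Fin (n - 1), single ⟨k, by omega⟩ ⟨k + 1, by omega⟩ 1 := by
  obtain ⟨m, rfl⟩ := Nat.exists_eq_add_one_of_ne_zero hn.ne'
  rw [permMatrix_eq_sum_single, Fin.sum_univ_castSucc, finRotate_last,
    add_comm _ (single (Fin.last m) _ _)]
  congr 1
  refine Fintype.sum_equiv (finCongr (Nat.add_sub_cancel m 1).symm) _ _ fun k => ?_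
  exact congrArg (single _ · 1) (finRotate_of_lt k.isLt)

theorem submatrix_eq_self_of_commute_permMatrix {ι R : Type*} [Fintype ι] [DecidableEq ι]
    [NonAssocSemiring R] {Y : Matrix ι ι R} {σ : Equiv.Perm ι}
    (h : Commute Y (σ.permMatrix R)) : Y.submatrix σ σ = Y := by
  have h' : Y.submatrix id σ.symm = Y.submatrix σ id := by
    rw [← PEquiv.mul_toMatrix_toPEquiv, ← PEquiv.toMatrix_toPEquiv_mul]
    exact h
  ext i j
  simpa using (congrFun (congrFun h' i) (σ j)).symm

theorem diag_eq_of_commute_permMatrix_finRotate {n : ℕ} {R : Type*} [NonAssocSemiring R]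
    {Y : Matrix (Fin n) (Fin n) R} (h : Commute Y ((finRotate n).permMatrix R)) (i j : Fin n) :
    Y i i = Y j j :=
  Fin.apply_eq_of_apply_finRotate (f := fun i => Y i i)
    (fun i => congrFun (congrFun (submatrix_eq_self_of_commute_permMatrix h) i) i) i j

theorem diag_eq_zero_of_trace_eq_zero {ι R : Type*} [Fintype ι] [AddCommMonoid R]
    [IsAddTorsionFree R] {Y : Matrix ι ι R} (hY : ∀ i j, Y i i = Y j j) (htr : Y.trace = 0)
    (i : ι) : Y i i = 0 := by
  have : Nonempty ι := ⟨i⟩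
  have h_card : Fintype.card ι • Y i i = 0 := by
    rw [← htr, trace, ← Finset.card_univ, ← Finset.sum_const]
    exact Finset.sum_congr rfl fun j _ => hY i j
  exact (nsmul_eq_zero_iff_right Fintype.card_ne_zero).1 h_card

theorem trace_mul_eq_zero_of_isDiag {ι R : Type*} [Fintype ι] [NonUnitalNonAssocSemiring R]
    {X Y : Matrix ι ι R} (hX : X.IsDiag) (hY : ∀ i, Y i i = 0) : (X * Y).trace = 0 := by
  classical
  rw [← hX.diagonal_diag]
  simp [trace, diagonal_mul, hY]

end Matrix

/-- For `G = SU(n)`, the Lie algebra `𝔱` of the standard maximal torus (traceless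
diagonal skew-Hermitian matrices) and the Lie algebra `𝔱'` of the centralizer of
`Λ_n` inside `𝔰𝔲(n)` are orthogonal with respect to the trace form
`⟨X, Y⟩ = Re tr(XY)`. -/
theorem torus_in_apposition_orthogonal
    (n : ℕ) (hn : 2 ≤ n) (C : ℂ)
    (hCabs : ‖C‖ = 1)
    (Λ : Matrix (Fin n) (Fin n) ℂ)
    (hΛ : Λ = C • (Matrix.single ⟨n - 1, by omega⟩ ⟨0, by omega⟩ 1 +
      ∑ k : Fin (n - 1),
        Matrix.single ⟨k, by omega⟩ ⟨k + 1, by omega⟩ 1))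
    (X Y : Matrix (Fin n) (Fin n) ℂ)
    -- X ∈ 𝔱 : diagonal, skew-Hermitian, traceless
    (hXdiag : X.IsDiag)
    -- Y ∈ 𝔱' : skew-Hermitian, traceless, commuting with Λ_n
    (hYtr : Y.trace = 0) (hYcomm : Y * Λ = Λ * Y) :
    ((X * Y).trace).re = 0 := by
  have hC₀ : C ≠ 0 := by
    rintro rfl
    simp at hCabs
  rw [← Matrix.permMatrix_finRotate (by omega)] at hΛ
  have h_comm : Commute Y ((finRotate n).permMatrix ℂ) :=
    (Commute.smul_right_iff₀ hC₀).1 (hΛ ▸ hYcomm)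
  have hY_diag := Matrix.diag_eq_zero_of_trace_eq_zero
    (Matrix.diag_eq_of_commute_permMatrix_finRotate h_comm) hYtr
  rw [Matrix.trace_mul_eq_zero_of_isDiag hXdiag hY_diag, Complex.zero_re]
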